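/- Every 1-Lipschitz map f from a finite subset F of a metric space X into the Banach space c₀ (real sequences converging to 0 with sup norm) admits a 1-Lipschitz extension f̄ : X → c₀. -/

import Mathlib

/-! Extend each coordinate `y ↦ f y n` to a 1-Lipschitz function on `X` by McShane's
theorem, then clamp the `n`-th coordinate to `[-ε n, ε n]`, where `ε n = ∑_{y ∈ F} |f y n|`.
Clamping is 1-Lipschitz and does not move the values on `F`, and since `ε n → 0` the clamped
sequences lie in `c₀`; as the sup norm is computed coordinatewise, the result is 1-Lipschitz. -/

open ZeroAtInfty Filter Topology Set NNReal

namespace ZeroAtInftyContinuousMap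

theorem lipschitzWith_iff_forall_apply {X α β : Type*} [PseudoMetricSpace X]
    [TopologicalSpace α] [PseudoMetricSpace β] [Zero β] {g : X → C₀(α, β)} {K : ℝ≥0} :
    LipschitzWith K g ↔ ∀ a, LipschitzWith K fun x ↦ g x a := by
  refine ⟨fun h a ↦ ?_, fun h ↦ .of_dist_le_mul fun x y ↦ ?_⟩
  · have := (BoundedContinuousFunction.lipschitz_eval_const a).comp
      (isometry_toBCF.lipschitz.comp h)
    rwa [one_mul, one_mul] at this
  · rw [← dist_toBCF_eq_dist]
    exact (BoundedContinuousFunction.dist_le (by positivity)).2 fun a ↦ (h a).dist_le_mul x y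

def ofTendsto (u : ℕ → ℝ) (hu : Tendsto u atTop (𝓝 0)) : C₀(ℕ, ℝ) :=
  ⟨⟨u, continuous_of_discreteTopology⟩, by rwa [cocompact_eq_atTop (α := ℕ)]⟩

@[simp]
theorem ofTendsto_apply (u : ℕ → ℝ) (hu : Tendsto u atTop (𝓝 0)) (n : ℕ) :
    ofTendsto u hu n = u n :=
  rfl

theorem tendsto_atTop (f : C₀(ℕ, ℝ)) : Tendsto f atTop (𝓝 0) := by
  simpa [cocompact_eq_atTop (α := ℕ)] using f.zero_at_infty'

theorem exists_tendsto_zero_forall_abs_le {ι : Type*} [Finite ι] (f : ι → C₀(ℕ, ℝ)) :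
    ∃ ε : ℕ → ℝ, 0 ≤ ε ∧ Tendsto ε atTop (𝓝 0) ∧ ∀ i n, |f i n| ≤ ε n := by
  have := Fintype.ofFinite ι
  refine ⟨fun n ↦ ∑ i, |f i n|, fun n ↦ by positivity, ?_, fun i n ↦ ?_⟩
  · simpa using tendsto_finsetSum Finset.univ fun i _ ↦ (tendsto_atTop (f i)).abs
  · exact Finset.single_le_sum (f := fun i ↦ |f i n|) (fun i _ ↦ abs_nonneg _)
      (Finset.mem_univ i)

end ZeroAtInftyContinuousMap

theorem LipschitzWith.exists_extend_real {X : Type*} [PseudoMetricSpace X] {s : Set X}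
    {f : s → ℝ} {K : ℝ≥0} (hf : LipschitzWith K f) :
    ∃ g : X → ℝ, LipschitzWith K g ∧ ∀ x : s, g x = f x := by
  have hf' : LipschitzOnWith K (Function.extend Subtype.val f 0) s := by
    rw [lipschitzOnWith_iff_restrict]
    convert hf
    ext x
    exact Subtype.val_injective.extend_apply _ _ x
  obtain ⟨g, hg, hfg⟩ := hf'.extend_real
  exact ⟨g, hg, fun x ↦ (hfg x.2).symm.trans (Subtype.val_injective.extend_apply _ _ x)⟩

open ZeroAtInftyContinuousMap in
theorem LipschitzWith.exists_extend_zeroAtInfty_of_forall_abs_le {X : Type*}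
    [PseudoMetricSpace X] {s : Set X} {f : s → C₀(ℕ, ℝ)} {K : ℝ≥0} (hf : LipschitzWith K f)
    {ε : ℕ → ℝ} (hε₀ : 0 ≤ ε) (hε : Tendsto ε atTop (𝓝 0)) (hfε : ∀ x n, |f x n| ≤ ε n) :
    ∃ g : X → C₀(ℕ, ℝ), LipschitzWith K g ∧ ∀ x : s, g x = f x := by
  have hIcc n : -ε n ≤ ε n := neg_le_self (hε₀ n)
  have hcoord n : ∃ E : X → ℝ, LipschitzWith K E ∧ ∀ x : s, E x = f x n :=
    (lipschitzWith_iff_forall_apply.1 hf n).exists_extend_real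
  choose E hE hEf using hcoord
  let clamp (x : X) (n : ℕ) : ℝ := projIcc (-ε n) (ε n) (hIcc n) (E n x)
  have hclamp x : Tendsto (clamp x) atTop (𝓝 0) :=
    squeeze_zero_norm (fun n ↦ abs_le.2 (projIcc (-ε n) (ε n) (hIcc n) (E n x)).2) hε
  refine ⟨fun x ↦ ofTendsto (clamp x) (hclamp x), ?_, fun x ↦ ?_⟩
  · refine lipschitzWith_iff_forall_apply.2 fun n ↦ ?_
    have := (LipschitzWith.subtype_val _).comp ((LipschitzWith.projIcc (hIcc n)).comp (hE n))
    rwa [one_mul, one_mul] at this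
  · ext n
    simp [clamp, hEf, projIcc_of_mem _ (abs_le.1 (hfε x n))]

theorem lipschitz_extension_to_c0 (X : Type) [MetricSpace X] (F : Set X) (hF : F.Finite)
    (f : ↥F → C₀(ℕ, ℝ)) (hf : LipschitzWith 1 f) :
    ∃ g : X → C₀(ℕ, ℝ), LipschitzWith 1 g ∧ ∀ x : ↥F, g ↑x = f x := by
  have := hF.to_subtype
  obtain ⟨ε, hε₀, hε, hfε⟩ := ZeroAtInftyContinuousMap.exists_tendsto_zero_forall_abs_le f
  exact hf.exists_extend_zeroAtInfty_of_forall_abs_le hε₀ hε hfε
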